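/- arXiv:2309.04273 — 3 statements merged into one kernel-verified Lean document; each statement's English description precedes it below -/
import Mathlib

section
/- Let R be a finite ring with identity and G ≤ Sym({1,…,n}) a finite permutation group acting on V = R^n by coordinate permutation, such that |G| is invertible in R, and let θ := |G|^{-1} ∑_{g∈G} g. If C ⊆ V is a left G-code, then ⊥(Cθ) = ker θ ⊕ (⊥C)θ; that is, ⊥(Cθ) = ker θ + (⊥C)θ and ker θ ∩ (⊥C)θ = {0}. -/
open scoped BigOperators

/-- Coordinate-permutation action: `(v · g) i = v (g⁻¹ i)`. -/
def pAct {α : Type} {n : ℕ} (g : Equiv.Perm (Fin n)) (v : Fin n → α) : Fin n → α :=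
  fun i => v (g⁻¹ i)

/-- Hayden's operator `θ`: `v θ = |G|⁻¹ ∑_{g ∈ G} v g`. -/
noncomputable def theta {R : Type} [Ring R] {n : ℕ} (G : Subgroup (Equiv.Perm (Fin n)))
    (v : Fin n → R) : Fin n → R :=
  fun i => Ring.inverse ((Nat.card G : R)) * ∑ᶠ g ∈ (G : Set (Equiv.Perm (Fin n))), v (g⁻¹ i)

/-- The left dual of a set of vectors in `R^n`. -/
def leftDual {R : Type} [Ring R] {n : ℕ} (S : Set (Fin n → R)) : Set (Fin n → R) :=
  {u | ∀ v ∈ S, ∑ i, u i * v i = 0}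

section hayden

open scoped Classical

variable {n : ℕ} {R : Type} [Ring R] (G : Subgroup (Equiv.Perm (Fin n)))

lemma theta_apply (v : Fin n → R) (i : Fin n) :
    theta G v i
      = Ring.inverse ((Nat.card G : R)) * ∑ g : G, v ((g : Equiv.Perm (Fin n))⁻¹ i) := by
  unfold theta
  congr 1
  rw [← finsum_set_coe_eq_finsum_mem, finsum_eq_sum_of_fintype]
  exact Fintype.sum_equiv (Equiv.subtypeEquivRight (fun x => SetLike.mem_coe)) _ _
    (fun g => rfl)

lemma kappa_comm (hG : IsUnit ((Nat.card G : R))) (x : R) :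
    Ring.inverse ((Nat.card G : R)) * x = x * Ring.inverse ((Nat.card G : R)) := by
  set c : R := (Nat.card G : R) with hc
  have h2 : c * Ring.inverse c = 1 := Ring.mul_inverse_cancel c hG
  have h1 : Ring.inverse c * c = 1 := Ring.inverse_mul_cancel c hG
  have hcen : c * x = x * c := (Nat.cast_commute (Nat.card G) x).eq
  calc Ring.inverse c * x = Ring.inverse c * x * (c * Ring.inverse c) := by rw [h2, mul_one]
    _ = Ring.inverse c * (x * c) * Ring.inverse c := by simp [mul_assoc]
    _ = Ring.inverse c * (c * x) * Ring.inverse c := by rw [← hcen]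
    _ = x * Ring.inverse c := by rw [← mul_assoc, mul_assoc _ c x, ← mul_assoc _ c, h1, one_mul]

lemma theta_sub (u v : Fin n → R) : theta G (u - v) = theta G u - theta G v := by
  funext i
  simp [theta_apply, Pi.sub_apply, Finset.sum_sub_distrib, mul_sub]

lemma theta_zero : theta G (0 : Fin n → R) = 0 := by
  funext i
  simp [theta_apply]

lemma theta_idem (hG : IsUnit ((Nat.card G : R))) (v : Fin n → R) :
    theta G (theta G v) = theta G v := by
  funext i
  set κ : R := Ring.inverse ((Nat.card G : R)) with hκ
  have key : ∀ g : G, theta G v ((g : Equiv.Perm (Fin n))⁻¹ i)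
      = κ * ∑ k : G, v ((k : Equiv.Perm (Fin n))⁻¹ i) := by
    intro g
    rw [theta_apply]
    congr 1
    refine Fintype.sum_equiv (Equiv.mulLeft g) _ _ (fun h => ?_)
    simp [mul_inv_rev, Equiv.Perm.mul_apply]
  rw [theta_apply]
  simp only [key]
  rw [Finset.sum_const, Finset.card_univ, nsmul_eq_mul, ← Nat.card_eq_fintype_card,
    ← mul_assoc, ← hκ]
  rw [show κ * (Nat.card G : R) = 1 from Ring.inverse_mul_cancel _ hG, one_mul, theta_apply]

lemma theta_adj (hG : IsUnit ((Nat.card G : R))) (u v : Fin n → R) :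
    ∑ i, theta G u i * v i = ∑ i, u i * theta G v i := by
  set κ : R := Ring.inverse ((Nat.card G : R)) with hκ
  calc ∑ i, theta G u i * v i
      = ∑ i, ∑ g : G, κ * (u ((g : Equiv.Perm (Fin n))⁻¹ i) * v i) := by
        refine Finset.sum_congr rfl fun i _ => ?_
        rw [theta_apply, ← hκ, mul_assoc, Finset.sum_mul, Finset.mul_sum]
    _ = ∑ g : G, ∑ i, κ * (u ((g : Equiv.Perm (Fin n))⁻¹ i) * v i) := Finset.sum_comm
    _ = ∑ g : G, ∑ j, κ * (u j * v ((g : Equiv.Perm (Fin n)) j)) := by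
        refine Finset.sum_congr rfl fun g _ => ?_
        exact (Fintype.sum_equiv (g : Equiv.Perm (Fin n)) _ _ (fun j => by simp)).symm
    _ = ∑ g : G, ∑ j, u j * (κ * v ((g : Equiv.Perm (Fin n))⁻¹ j)) := by
        refine (Fintype.sum_equiv (Equiv.inv G) _ _ (fun g => ?_))
        refine Finset.sum_congr rfl fun j _ => ?_
        rw [← mul_assoc, kappa_comm G hG (u j), mul_assoc, ← hκ]
        simp
    _ = ∑ j, ∑ g : G, u j * (κ * v ((g : Equiv.Perm (Fin n))⁻¹ j)) := Finset.sum_comm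
    _ = ∑ j, u j * theta G v j := by
        refine Finset.sum_congr rfl fun j _ => ?_
        rw [theta_apply, ← hκ, Finset.mul_sum, Finset.mul_sum]

lemma theta_mem_C {C : Submodule R (Fin n → R)}
    (hC : ∀ c ∈ C, ∀ g ∈ G, pAct g c ∈ C) {c : Fin n → R} (hc : c ∈ C) :
    theta G c ∈ C := by
  have h : theta G c
      = Ring.inverse ((Nat.card G : R)) • ∑ g : G, pAct (g : Equiv.Perm (Fin n)) c := by
    funext i
    rw [theta_apply]
    simp [pAct, Finset.sum_apply]
  rw [h]
  exact C.smul_mem _ (Submodule.sum_mem C fun g _ => hC c hc g g.2)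

end hayden

/-- Hayden's theorem for `G`-codes over finite Frobenius rings with `H = G`:
`⊥(Cθ) = ker θ ⊕ (⊥C)θ`. -/
theorem stmt2 {n : ℕ} {R : Type} [Ring R] [Fintype R]
    (G : Subgroup (Equiv.Perm (Fin n)))
    (hG : IsUnit ((Nat.card G : R)))
    (C : Submodule R (Fin n → R))
    (hC : ∀ c ∈ C, ∀ g ∈ G, pAct g c ∈ C) :
    leftDual (theta (R := R) G '' (C : Set (Fin n → R)))
        = {w | ∃ a ∈ {v : Fin n → R | theta (R := R) G v = 0},
               ∃ b ∈ theta (R := R) G '' leftDual (C : Set (Fin n → R)), w = a + b}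
      ∧ {v : Fin n → R | theta (R := R) G v = 0}
          ∩ (theta (R := R) G '' leftDual (C : Set (Fin n → R))) = {0} := by
  classical
  constructor
  · ext w
    simp only [Set.mem_setOf_eq]
    constructor
    · intro hw
      have hdual : theta G w ∈ leftDual (C : Set (Fin n → R)) := by
        intro x hx
        rw [theta_adj G hG]
        exact hw (theta G x) ⟨x, hx, rfl⟩
      refine ⟨w - theta G w, ?_, theta G w, ⟨theta G w, hdual, theta_idem G hG w⟩, by abel⟩
      show theta G (w - theta G w) = 0
      rw [theta_sub, theta_idem G hG, sub_self]
    · rintro ⟨a, ha, b, ⟨u, hu, rfl⟩, rfl⟩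
      rintro x' ⟨x, hx, rfl⟩
      have h1 : ∑ i, a i * theta G x i = 0 := by
        rw [← theta_adj G hG]
        have ha' : theta G a = 0 := ha
        rw [ha']
        simp
      have h2 : ∑ i, theta G u i * theta G x i = 0 := by
        rw [theta_adj G hG, theta_idem G hG]
        exact hu _ (theta_mem_C G hC hx)
      calc ∑ i, (a + theta G u) i * theta G x i
          = ∑ i, a i * theta G x i + ∑ i, theta G u i * theta G x i := by
            simp [Pi.add_apply, add_mul, Finset.sum_add_distrib]
        _ = 0 := by rw [h1, h2, add_zero]
  · ext v
    simp only [Set.mem_inter_iff, Set.mem_setOf_eq, Set.mem_singleton_iff]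
    constructor
    · rintro ⟨hv0, u, hu, rfl⟩
      exact (theta_idem G hG u).symm.trans hv0
    · rintro rfl
      exact ⟨theta_zero G, 0, fun x hx => by simp, theta_zero G⟩
end

section
/- Let G ≤ Sym({1,…,n}) act on ℝ^n by coordinate permutation, let Λ ⊆ ℝ^n be a G-lattice, and let H ≤ G be a subgroup. Then {u ∈ ℝ^n : ⟨u,v⟩ ∈ ℤ for all v ∈ Λ_0θ_H} = ker θ_H ⊕ (Λ_0)^*θ_H; that is, this set equals ker θ_H + {wθ_H : w ∈ (Λ_0)^*} and ker θ_H ∩ {wθ_H : w ∈ (Λ_0)^*} = {0}. -/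
/-!
`θ_H` is the orthogonal projection of `ℝ^n` onto the `H`-fixed vectors: it is additive,
idempotent (its image is `H`-invariant) and self-adjoint (permutations are orthogonal and `H`
is closed under inversion). For `u ∈ (Λ₀θ_H)^*` write `u = (u - uθ_H) + uθ_H`; self-adjointness
gives `uθ_H ∈ Λ₀^*`. Conversely `θ_H` maps `Λ₀` into itself, so
`⟨a + wθ_H, vθ_H⟩ = ⟨w, vθ_H⟩ ∈ ℤ` for `a ∈ ker θ_H`. Idempotence makes the sum direct.
-/

open scoped BigOperators

/-- Hayden's operator on `ℝ^n`: `v θ_H = |H|⁻¹ ∑_{h ∈ H} v h`. -/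
noncomputable def thetaR {n : ℕ} (H : Subgroup (Equiv.Perm (Fin n)))
    (v : Fin n → ℝ) : Fin n → ℝ :=
  fun i => (Nat.card H : ℝ)⁻¹ * ∑ᶠ h ∈ (H : Set (Equiv.Perm (Fin n))), v (h⁻¹ i)

/-- The dual of a subset `S ⊆ ℝ^n`:
`S^* = {u : ⟨u,v⟩ ∈ ℤ for all v ∈ S}`. -/
def dualL {n : ℕ} (S : Set (Fin n → ℝ)) : Set (Fin n → ℝ) :=
  {u | ∀ v ∈ S, ∃ m : ℤ, ∑ i, u i * v i = (m : ℝ)}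

open Set

theorem pAct_mul {α : Type} {n : ℕ} (g k : Equiv.Perm (Fin n)) (v : Fin n → α) :
    pAct (g * k) v = pAct g (pAct k v) := by
  funext i
  simp [pAct, mul_inv_rev, Equiv.Perm.mul_apply]

theorem pAct_dotProduct {n : ℕ} (g : Equiv.Perm (Fin n)) (u v : Fin n → ℝ) :
    pAct g u ⬝ᵥ v = u ⬝ᵥ pAct g⁻¹ v := by
  simp only [dotProduct, pAct, inv_inv]
  rw [← Equiv.sum_comp g]
  simp

section Averaging

variable {n : ℕ} (H : Subgroup (Equiv.Perm (Fin n)))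

theorem thetaR_eq_smul_sum [Fintype H] (v : Fin n → ℝ) :
    thetaR H v = (Nat.card H : ℝ)⁻¹ • ∑ h : H, pAct (h : Equiv.Perm (Fin n)) v := by
  funext i
  rw [thetaR, ← finsum_set_coe_eq_finsum_mem, finsum_eq_sum_of_fintype]
  simp [pAct, Finset.sum_apply]

theorem thetaR_add (u v : Fin n → ℝ) : thetaR H (u + v) = thetaR H u + thetaR H v := by
  cases nonempty_fintype H
  have pAct_add (g : Equiv.Perm (Fin n)) : pAct g (u + v) = pAct g u + pAct g v := rfl
  simp only [thetaR_eq_smul_sum, pAct_add, Finset.sum_add_distrib, smul_add]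

theorem pAct_thetaR {g : Equiv.Perm (Fin n)} (hg : g ∈ H) (v : Fin n → ℝ) :
    pAct g (thetaR H v) = thetaR H v := by
  cases nonempty_fintype H
  have hsum : ∑ h : H, pAct (g * (h : Equiv.Perm (Fin n))) v =
      ∑ h : H, pAct (h : Equiv.Perm (Fin n)) v :=
    Fintype.sum_equiv (Equiv.mulLeft ⟨g, hg⟩) _ _ fun h => rfl
  calc pAct g (thetaR H v)
      = (Nat.card H : ℝ)⁻¹ • ∑ h : H, pAct (g * (h : Equiv.Perm (Fin n))) v := by
        rw [thetaR_eq_smul_sum]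
        funext i
        simp only [pAct_mul, pAct, Pi.smul_apply, Finset.sum_apply]
    _ = thetaR H v := by rw [hsum, thetaR_eq_smul_sum]

theorem thetaR_thetaR (v : Fin n → ℝ) : thetaR H (thetaR H v) = thetaR H v := by
  cases nonempty_fintype H
  conv_lhs => rw [thetaR_eq_smul_sum]
  simp only [pAct_thetaR H (Subtype.prop _), Finset.sum_const, Finset.card_univ,
    ← Nat.card_eq_fintype_card, ← Nat.cast_smul_eq_nsmul ℝ, smul_smul]
  rw [inv_mul_cancel₀ (by exact_mod_cast Nat.card_pos.ne'), one_smul]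

theorem thetaR_dotProduct (u v : Fin n → ℝ) : thetaR H u ⬝ᵥ v = u ⬝ᵥ thetaR H v := by
  cases nonempty_fintype H
  simp only [thetaR_eq_smul_sum, smul_dotProduct, dotProduct_smul, sum_dotProduct,
    dotProduct_sum, pAct_dotProduct]
  congr 1
  exact Fintype.sum_equiv (Equiv.inv H) _ _ fun h => rfl

end Averaging

theorem mapsTo_sep_mem_apply_mem {M : Type*} {P : M → M} (hP : ∀ v, P (P v) = P v)
    (L : Set M) : MapsTo P {v ∈ L | P v ∈ L} {v ∈ L | P v ∈ L} :=
  fun _ hv => ⟨hv.2, (hP _).symm ▸ hv.2⟩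

theorem setOf_apply_eq_zero_inter_image_eq_singleton {M : Type*} [AddZeroClass M] (P : M →+ M)
    (hP : ∀ v, P (P v) = P v) {X : Set M} (hX : (0 : M) ∈ X) :
    {v | P v = 0} ∩ P '' X = {0} := by
  refine subset_antisymm ?_ (singleton_subset_iff.2 ⟨map_zero P, 0, hX, map_zero P⟩)
  rintro _ ⟨hv, w, -, rfl⟩
  exact (hP w).symm.trans hv

theorem mem_dualL_iff {n : ℕ} {S : Set (Fin n → ℝ)} {u : Fin n → ℝ} :
    u ∈ dualL S ↔ ∀ v ∈ S, ∃ m : ℤ, u ⬝ᵥ v = m :=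
  Iff.rfl

theorem zero_mem_dualL {n : ℕ} (S : Set (Fin n → ℝ)) : 0 ∈ dualL S :=
  fun _ _ => ⟨0, by simp⟩

section SelfAdjointProjection

variable {n : ℕ} (P : (Fin n → ℝ) →+ (Fin n → ℝ))

theorem apply_mem_dualL_of_mem_dualL_image (hPadj : ∀ u v, P u ⬝ᵥ v = u ⬝ᵥ P v)
    {S : Set (Fin n → ℝ)} {u : Fin n → ℝ} (hu : u ∈ dualL (P '' S)) : P u ∈ dualL S := by
  rw [mem_dualL_iff] at hu ⊢
  intro v hv
  rw [hPadj]
  exact hu (P v) ⟨v, hv, rfl⟩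

theorem dualL_image_eq_ker_add_image_dualL (hP : ∀ v, P (P v) = P v)
    (hPadj : ∀ u v, P u ⬝ᵥ v = u ⬝ᵥ P v)
    {S : Set (Fin n → ℝ)} (hS : MapsTo P S S) :
    dualL (P '' S) = {w | ∃ a ∈ {v | P v = 0}, ∃ b ∈ P '' dualL S, w = a + b} := by
  ext u
  constructor
  · intro hu
    refine ⟨u - P u, ?_, P u, ⟨P u, apply_mem_dualL_of_mem_dualL_image P hPadj hu, hP u⟩, ?_⟩
    · simp [hP]
    · abel
  · rintro ⟨a, ha, _, ⟨w, hw, rfl⟩, rfl⟩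
    rw [mem_dualL_iff] at hw ⊢
    rintro _ ⟨v, hv, rfl⟩
    obtain ⟨m, hm⟩ := hw (P v) (hS hv)
    refine ⟨m, ?_⟩
    rw [add_dotProduct, ← hPadj, ha, zero_dotProduct, hPadj, hP, hm, zero_add]

end SelfAdjointProjection

theorem stmt9_general {n : ℕ}
    (H : Subgroup (Equiv.Perm (Fin n)))
    (L : Submodule ℤ (Fin n → ℝ)) :
    dualL (thetaR H '' {v ∈ (L : Set (Fin n → ℝ)) | thetaR H v ∈ L})
        = {w | ∃ a ∈ {v : Fin n → ℝ | thetaR H v = 0},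
               ∃ b ∈ thetaR H '' dualL {v ∈ (L : Set (Fin n → ℝ)) | thetaR H v ∈ L},
                 w = a + b}
      ∧ {v : Fin n → ℝ | thetaR H v = 0}
          ∩ (thetaR H '' dualL {v ∈ (L : Set (Fin n → ℝ)) | thetaR H v ∈ L}) = {0} := by
  let θ : (Fin n → ℝ) →+ (Fin n → ℝ) := AddMonoidHom.mk' (thetaR H) (thetaR_add H)
  exact ⟨dualL_image_eq_ker_add_image_dualL θ (thetaR_thetaR H) (thetaR_dotProduct H)
      (mapsTo_sep_mem_apply_mem (thetaR_thetaR H) L),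
    setOf_apply_eq_zero_inter_image_eq_singleton θ (thetaR_thetaR H) (zero_mem_dualL _)⟩

/-- Lattice version of Hayden's theorem:
`(Λ₀θ_H)^* = ker θ_H ⊕ (Λ₀)^* θ_H`. -/
theorem stmt9 {n : ℕ}
    (G H : Subgroup (Equiv.Perm (Fin n))) (hHG : H ≤ G)
    (L : Submodule ℤ (Fin n → ℝ))
    (hlat : ∃ b : Module.Basis (Fin n) ℝ (Fin n → ℝ), L = Submodule.span ℤ (Set.range b))
    (hG : ∀ v ∈ L, ∀ g ∈ G, pAct g v ∈ L) :
    dualL (thetaR H '' {v ∈ (L : Set (Fin n → ℝ)) | thetaR H v ∈ L})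
        = {w | ∃ a ∈ {v : Fin n → ℝ | thetaR H v = 0},
               ∃ b ∈ thetaR H '' dualL {v ∈ (L : Set (Fin n → ℝ)) | thetaR H v ∈ L},
                 w = a + b}
      ∧ {v : Fin n → ℝ | thetaR H v = 0}
          ∩ (thetaR H '' dualL {v ∈ (L : Set (Fin n → ℝ)) | thetaR H v ∈ L}) = {0} :=
  stmt9_general H L
end

section
/- Fix an integer k ≥ 2, let C ⊆ (ℤ/kℤ)^n be a G-code for a finite permutation group G ≤ Sym({1,…,n}), and let H ≤ G with gcd(|H|, k) = 1 and with t orbits on {1,…,n}. Define Λ_0(C) := {v ∈ Λ(C) : vθ_H ∈ Λ(C)}, where θ_H acts on ℝ^n. Then Λ_0(C)θ_H := {vθ_H : v ∈ Λ_0(C)} is a lattice in the fixed subspace ℝ^nθ_H (a free ℤ-module of rank t whose ℝ-span is ℝ^nθ_H), and moreover Λ_0(C)θ_H = Λ(Cθ_H) ∩ ℝ^nθ_H, where Cθ_H := {cθ_H : c ∈ C} is the image of C under the mod-k Hayden operator cθ_H := (|H| mod k)^{-1} ∑_{h∈H} ch. -/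
open scoped BigOperators

/-- The mod-`k` Hayden operator on `(ℤ/kℤ)^n`:
`c θ_H = (|H| mod k)⁻¹ ∑_{h ∈ H} c h`. -/
noncomputable def thetaZ {n : ℕ} (k : ℕ) (H : Subgroup (Equiv.Perm (Fin n)))
    (c : Fin n → ZMod k) : Fin n → ZMod k :=
  fun i => Ring.inverse ((Nat.card H : ZMod k)) *
    ∑ᶠ h ∈ (H : Set (Equiv.Perm (Fin n))), c (h⁻¹ i)

/-- The orbit of a coordinate `j` under the permutation group `H`. -/
def orbSet {n : ℕ} (H : Subgroup (Equiv.Perm (Fin n))) (j : Fin n) : Set (Fin n) :=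
  {m | ∃ h ∈ H, h j = m}

/-- The fixed subspace `ℝ^n θ_H` of `H`-fixed vectors. -/
def fixH {n : ℕ} (H : Subgroup (Equiv.Perm (Fin n))) : Set (Fin n → ℝ) :=
  {v | ∀ h ∈ H, pAct h v = v}

/-- Construction A: `Λ(C) = (1/√k)·{x ∈ ℤ^n : x mod k ∈ C}`. -/
noncomputable def conA {n : ℕ} (k : ℕ) (S : Set (Fin n → ZMod k)) : Set (Fin n → ℝ) :=
  {v | ∃ x : Fin n → ℤ, (fun i => ((x i : ZMod k))) ∈ S ∧
        v = fun i => (Real.sqrt k)⁻¹ * (x i : ℝ)}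

/-!
Averaging over `H` is a projection onto the `H`-fixed vectors, so `Λ₀(C)θ_H = Λ(C) ∩ ℝⁿθ_H`.
An integer vector fixed by `H` reduces to a codeword fixed by `H`, which the mod-`k` operator
leaves unchanged, and `Cθ_H ⊆ C`; this gives `Λ(C) ∩ ℝⁿθ_H = Λ(Cθ_H) ∩ ℝⁿθ_H`.
A fixed vector is constant on orbits, so `ℝⁿθ_H ≅ ℝᵗ` via a choice of orbit representatives,
and this identifies `Λ(C) ∩ ℝⁿθ_H` with `(1/√k)` times a subgroup of `ℤᵗ` containing `kℤᵗ`.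
Such a subgroup is free of rank `t`, and any `ℤ`-basis of it spans `ℝᵗ` over `ℝ`.
-/

section HaydenOperator

attribute [local instance] Fintype.ofFinite

variable {n : ℕ} {H : Subgroup (Equiv.Perm (Fin n))}

theorem finsum_mem_subgroup_eq_sum {M : Type*} [AddCommMonoid M] (f : Equiv.Perm (Fin n) → M) :
    ∑ᶠ h ∈ (H : Set (Equiv.Perm (Fin n))), f h = ∑ h : H, f h :=
  (finsum_set_coe_eq_finsum_mem _).symm.trans (finsum_eq_sum_of_fintype _)

theorem thetaR_apply (v : Fin n → ℝ) (i : Fin n) :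
    thetaR H v i = (Nat.card H : ℝ)⁻¹ * ∑ h : H, v ((h : Equiv.Perm (Fin n))⁻¹ i) := by
  rw [thetaR, finsum_mem_subgroup_eq_sum (fun h => v (h⁻¹ i))]

theorem thetaZ_apply {k : ℕ} (c : Fin n → ZMod k) (i : Fin n) :
    thetaZ k H c i = Ring.inverse (Nat.card H : ZMod k) *
      ∑ h : H, c ((h : Equiv.Perm (Fin n))⁻¹ i) := by
  rw [thetaZ, finsum_mem_subgroup_eq_sum (fun h => c (h⁻¹ i))]

theorem thetaR_mem_fixH (v : Fin n → ℝ) : thetaR H v ∈ fixH H := by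
  intro g hg
  funext i
  simp only [pAct, thetaR_apply]
  congr 1
  exact Fintype.sum_equiv (Equiv.mulLeft (⟨g, hg⟩ : H)) _ _
    (fun h => by simp [mul_inv_rev, Equiv.Perm.mul_apply])

theorem thetaR_eq_self {v : Fin n → ℝ} (hv : v ∈ fixH H) : thetaR H v = v := by
  funext i
  have hfix (h : H) : v ((h : Equiv.Perm (Fin n))⁻¹ i) = v i := congrFun (hv h h.2) i
  rw [thetaR_apply, Fintype.sum_congr _ _ hfix, Finset.sum_const, Finset.card_univ,
    nsmul_eq_mul, ← Nat.card_eq_fintype_card, inv_mul_cancel_left₀ (by simp)]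

theorem thetaZ_eq_self {k : ℕ} (hgcd : Nat.gcd (Nat.card H) k = 1) {c : Fin n → ZMod k}
    (hc : ∀ h ∈ H, pAct h c = c) : thetaZ k H c = c := by
  funext i
  have hfix (h : H) : c ((h : Equiv.Perm (Fin n))⁻¹ i) = c i := congrFun (hc h h.2) i
  rw [thetaZ_apply, Fintype.sum_congr _ _ hfix, Finset.sum_const, Finset.card_univ,
    nsmul_eq_mul, ← Nat.card_eq_fintype_card, ← mul_assoc,
    Ring.inverse_mul_cancel _ ((ZMod.isUnit_iff_coprime _ _).2 hgcd), one_mul]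

theorem thetaZ_mem {k : ℕ} {C : Submodule (ZMod k) (Fin n → ZMod k)}
    (hC : ∀ c ∈ C, ∀ h ∈ H, pAct h c ∈ C) {c : Fin n → ZMod k} (hc : c ∈ C) :
    thetaZ k H c ∈ C := by
  have hsum : thetaZ k H c
      = Ring.inverse (Nat.card H : ZMod k) • ∑ h : H, pAct (h : Equiv.Perm (Fin n)) c := by
    funext i
    simp only [thetaZ_apply, Pi.smul_apply, smul_eq_mul, Finset.sum_apply, pAct]
  rw [hsum]
  exact C.smul_mem _ (C.sum_mem fun h _ => hC c hc h h.2)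

end HaydenOperator

section ConstructionA

variable {n : ℕ} {H : Subgroup (Equiv.Perm (Fin n))} {k : ℕ}

theorem image_thetaR_eq_conA_inter_fixH (S : Set (Fin n → ZMod k)) :
    thetaR H '' {v ∈ conA k S | thetaR H v ∈ conA k S} = conA k S ∩ fixH H := by
  ext w
  constructor
  · rintro ⟨v, ⟨-, hv⟩, rfl⟩
    exact ⟨hv, thetaR_mem_fixH v⟩
  · rintro ⟨hw, hfix⟩
    exact ⟨w, ⟨hw, (thetaR_eq_self hfix).symm ▸ hw⟩, thetaR_eq_self hfix⟩

theorem pAct_eq_self_of_mem_fixH (hk : k ≠ 0) {x : Fin n → ℤ}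
    (hx : (fun i => (Real.sqrt k)⁻¹ * (x i : ℝ)) ∈ fixH H) : ∀ h ∈ H, pAct h x = x := by
  intro h hh
  funext i
  have hi := congrFun (hx h hh) i
  simp only [pAct] at hi
  exact_mod_cast mul_left_cancel₀ (by positivity) hi

theorem conA_inter_fixH_eq_conA_image_thetaZ (hk : k ≠ 0) (hgcd : Nat.gcd (Nat.card H) k = 1)
    {C : Submodule (ZMod k) (Fin n → ZMod k)} (hC : ∀ c ∈ C, ∀ h ∈ H, pAct h c ∈ C) :
    conA k C ∩ fixH H = conA k (thetaZ k H '' C) ∩ fixH H := by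
  ext w
  constructor
  · rintro ⟨⟨x, hx, rfl⟩, hfix⟩
    refine ⟨⟨x, ⟨_, hx, thetaZ_eq_self hgcd fun h hh => ?_⟩, rfl⟩, hfix⟩
    funext i
    exact congrArg (fun y : Fin n → ℤ => (y i : ZMod k)) (pAct_eq_self_of_mem_fixH hk hfix h hh)
  · rintro ⟨⟨x, ⟨c, hc, hcx⟩, rfl⟩, hfix⟩
    exact ⟨⟨x, hcx ▸ thetaZ_mem hC hc, rfl⟩, hfix⟩

end ConstructionA

section IntegerLattice

def intCastPi (ι : Type*) : (ι → ℤ) →ₗ[ℤ] (ι → ℝ) :=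
  LinearMap.compLeft (Int.castAddHom ℝ).toIntLinearMap ι

@[simp]
theorem intCastPi_apply {ι : Type*} (a : ι → ℤ) (i : ι) : intCastPi ι a i = a i :=
  rfl

variable {ι : Type*} [Fintype ι] {k : ℤ}

theorem span_intCastPi_image_eq_top (hk : k ≠ 0) {s : Set (ι → ℤ)}
    (hs : ∀ a, k • a ∈ Submodule.span ℤ s) : Submodule.span ℝ (intCastPi ι '' s) = ⊤ := by
  classical
  set W := Submodule.span ℝ (intCastPi ι '' s)
  have hle : Submodule.span ℤ s ≤ (W.restrictScalars ℤ).comap (intCastPi ι) :=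
    Submodule.span_le.2 fun a ha => Submodule.subset_span ⟨a, ha, rfl⟩
  rw [eq_top_iff, ← (Pi.basisFun ℝ ι).span_eq, Submodule.span_le]
  rintro _ ⟨i, rfl⟩
  have hki : intCastPi ι (k • Pi.single i 1) ∈ W := hle (hs _)
  rwa [map_zsmul, ← Int.cast_smul_eq_zsmul ℝ, Submodule.smul_mem_iff _ (by exact_mod_cast hk),
    show intCastPi ι (Pi.single i 1) = Pi.single i 1 by ext j; simp [Pi.single_apply]] at hki

theorem finrank_eq_of_smul_mem (hk : k ≠ 0) (N : Submodule ℤ (ι → ℤ))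
    (hN : ∀ a, k • a ∈ N) : Module.finrank ℤ N = Fintype.card ι := by
  have hmul : Function.Injective (LinearMap.codRestrict N (k • LinearMap.id) hN) :=
    fun a b hab => smul_right_injective _ hk (congrArg Subtype.val hab)
  have := LinearMap.finrank_le_finrank_of_injective hmul
  have := Submodule.finrank_le N
  simp only [Module.finrank_fintype_fun_eq_card] at *
  omega

theorem exists_linearIndependent_span_eq {V : Type*} [AddCommGroup V] [Module ℝ V]
    (hk : k ≠ 0) (N : Submodule ℤ (ι → ℤ)) (hN : ∀ a, k • a ∈ N)
    (φ : (ι → ℝ) →ₗ[ℝ] V) (hφ : Function.Injective φ) :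
    ∃ e : ι → V, LinearIndependent ℝ e ∧
      (Submodule.span ℤ (Set.range e) : Set V) = φ '' (intCastPi ι '' N) ∧
      (Submodule.span ℝ (Set.range e) : Set V) = Set.range φ := by
  let b : Module.Basis ι ℤ N := (Module.finBasisOfFinrankEq ℤ N
    (finrank_eq_of_smul_mem hk N hN)).reindex (Fintype.equivFin ι).symm
  have hb : Submodule.span ℤ (N.subtype '' Set.range b) = N := by
    rw [Submodule.span_image, b.span_eq, Submodule.map_subtype_top]
  let f : ι → ι → ℝ := intCastPi ι ∘ N.subtype ∘ b
  have hrange : Set.range f = intCastPi ι '' (N.subtype '' Set.range b) := by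
    simp only [f, Set.range_comp]
  have hf : Submodule.span ℝ (Set.range f) = ⊤ :=
    hrange ▸ span_intCastPi_image_eq_top hk (by rwa [hb])
  refine ⟨φ ∘ f, ?_, ?_, ?_⟩
  · exact (linearIndependent_of_top_le_span_of_card_eq_finrank hf.ge (by simp)).map'
      φ (LinearMap.ker_eq_bot.2 hφ)
  · rw [Set.range_comp, hrange, ← LinearMap.coe_restrictScalars ℤ φ, Submodule.span_image,
      Submodule.span_image, hb]
    simp
  · rw [Set.range_comp, Submodule.span_image, hf, Submodule.map_top, LinearMap.coe_range]

end IntegerLattice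

section Orbits

variable {n t : ℕ} {H : Subgroup (Equiv.Perm (Fin n))} {rep : Fin t → Fin n}
  (hrep : ∀ j : Fin n, ∃! i : Fin t, j ∈ orbSet H (rep i))

noncomputable def orbitIndex (j : Fin n) : Fin t := (hrep j).exists.choose

theorem mem_orbSet_orbitIndex (j : Fin n) : j ∈ orbSet H (rep (orbitIndex hrep j)) :=
  (hrep j).exists.choose_spec

theorem orbitIndex_eq_of_mem {j : Fin n} {i : Fin t} (hj : j ∈ orbSet H (rep i)) :
    orbitIndex hrep j = i :=
  (hrep j).unique (mem_orbSet_orbitIndex hrep j) hj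

theorem orbitIndex_rep (i : Fin t) : orbitIndex hrep (rep i) = i :=
  orbitIndex_eq_of_mem hrep ⟨1, H.one_mem, rfl⟩

theorem orbitIndex_perm_inv_apply {h : Equiv.Perm (Fin n)} (hh : h ∈ H) (j : Fin n) :
    orbitIndex hrep (h⁻¹ j) = orbitIndex hrep j := by
  obtain ⟨g, hg, hgj⟩ := mem_orbSet_orbitIndex hrep j
  exact orbitIndex_eq_of_mem hrep
    ⟨h⁻¹ * g, mul_mem (inv_mem hh) hg, by rw [Equiv.Perm.mul_apply, hgj]⟩

theorem apply_eq_apply_rep_orbitIndex {α : Type} {v : Fin n → α}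
    (hv : ∀ h ∈ H, pAct h v = v) (j : Fin n) : v j = v (rep (orbitIndex hrep j)) := by
  obtain ⟨g, hg, hgj⟩ := mem_orbSet_orbitIndex hrep j
  have := congrFun (hv g⁻¹ (inv_mem hg)) (rep (orbitIndex hrep j))
  rwa [pAct, inv_inv, hgj] at this

noncomputable def orbitEmbedding (k : ℕ) : (Fin t → ℝ) →ₗ[ℝ] (Fin n → ℝ) :=
  (Real.sqrt k)⁻¹ • LinearMap.funLeft ℝ ℝ (orbitIndex hrep)

theorem orbitEmbedding_apply (k : ℕ) (a : Fin t → ℝ) (j : Fin n) :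
    orbitEmbedding hrep k a j = (Real.sqrt k)⁻¹ * a (orbitIndex hrep j) :=
  rfl

theorem orbitEmbedding_injective {k : ℕ} (hk : k ≠ 0) :
    Function.Injective (orbitEmbedding hrep k) :=
  (smul_right_injective (Fin n → ℝ) (by positivity : (Real.sqrt k)⁻¹ ≠ 0)).comp
    (LinearMap.funLeft_injective_of_surjective ℝ ℝ _ fun i => ⟨rep i, orbitIndex_rep hrep i⟩)

theorem range_orbitEmbedding {k : ℕ} (hk : k ≠ 0) :
    Set.range (orbitEmbedding hrep k) = fixH H := by
  ext v
  constructor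
  · rintro ⟨a, rfl⟩ h hh
    funext j
    simp only [pAct, orbitEmbedding_apply, orbitIndex_perm_inv_apply hrep hh]
  · intro hv
    refine ⟨fun i => Real.sqrt k * v (rep i), funext fun j => ?_⟩
    rw [orbitEmbedding_apply, inv_mul_cancel_left₀ (by positivity),
      ← apply_eq_apply_rep_orbitIndex hrep hv]

noncomputable def orbitCode (k : ℕ) (C : Submodule (ZMod k) (Fin n → ZMod k)) :
    Submodule ℤ (Fin t → ℤ) :=
  (C.restrictScalars ℤ).comap ((LinearMap.funLeft ℤ (ZMod k) (orbitIndex hrep)).comp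
    (LinearMap.compLeft (Int.castAddHom (ZMod k)).toIntLinearMap (Fin t)))

theorem mem_orbitCode {k : ℕ} {C : Submodule (ZMod k) (Fin n → ZMod k)} {a : Fin t → ℤ} :
    a ∈ orbitCode hrep k C ↔ (fun j => (a (orbitIndex hrep j) : ZMod k)) ∈ C :=
  Iff.rfl

theorem smul_mem_orbitCode (k : ℕ) (C : Submodule (ZMod k) (Fin n → ZMod k)) (a : Fin t → ℤ) :
    (k : ℤ) • a ∈ orbitCode hrep k C := by
  rw [mem_orbitCode]
  convert C.zero_mem using 2
  simp

theorem conA_inter_fixH_eq_image {k : ℕ} (hk : k ≠ 0)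
    (C : Submodule (ZMod k) (Fin n → ZMod k)) :
    conA k C ∩ fixH H = orbitEmbedding hrep k '' (intCastPi (Fin t) '' orbitCode hrep k C) := by
  ext w
  constructor
  · rintro ⟨⟨x, hx, rfl⟩, hfix⟩
    have hx_const := apply_eq_apply_rep_orbitIndex hrep (pAct_eq_self_of_mem_fixH hk hfix)
    refine ⟨_, ⟨x ∘ rep, ?_, rfl⟩, funext fun j => ?_⟩
    · rw [SetLike.mem_coe, mem_orbitCode]
      simpa only [Function.comp_apply, ← hx_const] using SetLike.mem_coe.1 hx
    · simp [orbitEmbedding_apply, ← hx_const]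
  · rintro ⟨_, ⟨a, ha, rfl⟩, rfl⟩
    refine ⟨⟨fun j => a (orbitIndex hrep j), ha, rfl⟩, ?_⟩
    rw [← range_orbitEmbedding hrep hk]
    exact Set.mem_range_self _

end Orbits

/-- `Λ₀(C)θ_H` is a lattice in the fixed subspace, and
`Λ₀(C)θ_H = Λ(Cθ_H) ∩ ℝ^n θ_H`. -/
theorem stmt12 {n t : ℕ} (k : ℕ) (hk : 2 ≤ k)
    (G H : Subgroup (Equiv.Perm (Fin n))) (hHG : H ≤ G)
    (hgcd : Nat.gcd (Nat.card H) k = 1)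
    (rep : Fin t → Fin n)
    (hrep : ∀ j : Fin n, ∃! i : Fin t, j ∈ orbSet H (rep i))
    (C : Submodule (ZMod k) (Fin n → ZMod k))
    (hC : ∀ c ∈ C, ∀ g ∈ G, pAct g c ∈ C) :
    (∃ e : Fin t → (Fin n → ℝ), LinearIndependent ℝ e ∧
      (Submodule.span ℤ (Set.range e) : Set (Fin n → ℝ))
        = thetaR H '' {v ∈ conA k (C : Set (Fin n → ZMod k)) |
            thetaR H v ∈ conA k (C : Set (Fin n → ZMod k))} ∧
      (Submodule.span ℝ (Set.range e) : Set (Fin n → ℝ)) = fixH H)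
    ∧ thetaR H '' {v ∈ conA k (C : Set (Fin n → ZMod k)) |
          thetaR H v ∈ conA k (C : Set (Fin n → ZMod k))}
        = conA k (thetaZ k H '' (C : Set (Fin n → ZMod k))) ∩ fixH H := by
  have hk0 : k ≠ 0 := by omega
  have hCH : ∀ c ∈ C, ∀ h ∈ H, pAct h c ∈ C := fun c hc h hh => hC c hc h (hHG hh)
  rw [image_thetaR_eq_conA_inter_fixH]
  refine ⟨?_, conA_inter_fixH_eq_conA_image_thetaZ hk0 hgcd hCH⟩
  obtain ⟨e, he_indep, he_int, he_real⟩ := exists_linearIndependent_span_eq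
    (Nat.cast_ne_zero.2 hk0) _ (smul_mem_orbitCode hrep k C) _ (orbitEmbedding_injective hrep hk0)
  refine ⟨e, he_indep, ?_, ?_⟩
  · rw [he_int, conA_inter_fixH_eq_image hrep hk0]
  · rw [he_real, range_orbitEmbedding hrep hk0]
end
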